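/- arXiv:0910.0322 — 4 statements merged into one kernel-verified Lean document; each statement's English description precedes it below -/
import Mathlib

section
/- Under the higher-dimensional setup (u ≥ v smooth on the closure of Ω = (0,1) × {|y|<1}, u > 0, v > 0, ∂_t u > 0 in Ω, u(0,y) = 0, main Laplacian comparison condition), let t(s,y) be a C² function on an open subset U of {(s,y) : 0 < s < 1, |y| < 1} satisfying 0 < t(s,y) ≤ s and u(t(s,y), y) = v(s,y) on U, and set τ(s,y) = s − t(s,y). Then at every point of U, with the derivatives of u evaluated at (t(s,y), y) and the derivatives of τ taken in the variables (s,y): Δτ − (u_tt/u_t)(|∇τ|² − 2 ∂_s τ) + 2 Σ_{i=1}^n (u_{t y_i}/u_t) ∂_{y_i} τ ≤ 0, where ∇τ = (∂_s τ, ∂_{y_1} τ, …, ∂_{y_n} τ) and Δτ = ∂_ss τ + Σ_i ∂_{y_i y_i} τ. -/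
open Set

/-- `i`-th partial derivative in the `t` variable. -/
noncomputable def partialT (n : ℕ) (f : ℝ → EuclideanSpace ℝ (Fin n) → ℝ) (i : ℕ)
    (t : ℝ) (y : EuclideanSpace ℝ (Fin n)) : ℝ :=
  iteratedDeriv i (fun t' => f t' y) t

/-- Partial derivative in the `j`-th `y` variable. -/
noncomputable def partialY (n : ℕ) (j : Fin n) (f : ℝ → EuclideanSpace ℝ (Fin n) → ℝ)
    (t : ℝ) (y : EuclideanSpace ℝ (Fin n)) : ℝ :=
  deriv (fun h : ℝ => f t (y + EuclideanSpace.single j h)) 0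

/-- Laplacian in all `n+1` variables `(t, y)`. -/
noncomputable def lapTY (n : ℕ) (f : ℝ → EuclideanSpace ℝ (Fin n) → ℝ)
    (t : ℝ) (y : EuclideanSpace ℝ (Fin n)) : ℝ :=
  partialT n f 2 t y + ∑ j : Fin n, partialY n j (partialY n j f) t y

/-- The domain `Ω = {(t,y) : 0 < t < 1, |y| < 1}`. -/
def domTY (n : ℕ) : Set (ℝ × EuclideanSpace ℝ (Fin n)) :=
  {p | 0 < p.1 ∧ p.1 < 1 ∧ ‖p.2‖ < 1}

/-! Near each point `v(s, y) = u(s - τ(s, y), y)`, so the second-order chain rule expresses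
`v_ss` and `v_{y_j y_j}` through the derivatives of `τ` at `(s, y)` and of `u` at `(t(s, y), y)`.
Substituting these expressions into `Δu(t, y) ≤ Δv(s, y)` and dividing by `u_t > 0` gives the
inequality; the mixed terms `u_{t y_j}` combine by symmetry of the Hessian of `u`. -/

open Filter Topology Function

section SecondDerivative

variable {𝕜 : Type*} [NontriviallyNormedField 𝕜]
  {D E G : Type*} [NormedAddCommGroup D] [NormedSpace 𝕜 D] [NormedAddCommGroup E]
  [NormedSpace 𝕜 E] [NormedAddCommGroup G] [NormedSpace 𝕜 G]

theorem lineDeriv_lineDeriv_of_contDiffAt {F : E → G} {x : E} (hF : ContDiffAt 𝕜 2 F x)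
    (v w : E) :
    lineDeriv 𝕜 (fun p => lineDeriv 𝕜 F p v) x w = fderiv 𝕜 (fderiv 𝕜 F) x w v := by
  have hFv : (fun p => lineDeriv 𝕜 F p v) =ᶠ[𝓝 x] fun p => fderiv 𝕜 F p v := by
    filter_upwards [hF.eventually (by simp)] with p hp
    exact (hp.differentiableAt two_ne_zero).lineDeriv_eq_fderiv
  have hdF : DifferentiableAt 𝕜 (fderiv 𝕜 F) x :=
    (hF.fderiv_right (m := 1) le_rfl).differentiableAt one_ne_zero
  rw [hFv.lineDeriv_eq, (hdF.hasFDerivAt.clm_apply (hasFDerivAt_const v x)).hasLineDerivAt w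
    |>.lineDeriv]
  simp

theorem fderiv_fderiv_comp_apply {F : E → G} {Φ : D → E} {Φ' : D → D →L[𝕜] E}
    {Φ'' : D →L[𝕜] D →L[𝕜] E} {x : D} (hF : ContDiffAt 𝕜 2 F (Φ x))
    (hΦ : ∀ᶠ p in 𝓝 x, HasFDerivAt Φ (Φ' p) p) (hΦ' : HasFDerivAt Φ' Φ'' x) (w w' : D) :
    fderiv 𝕜 (fderiv 𝕜 (F ∘ Φ)) x w w'
      = fderiv 𝕜 (fderiv 𝕜 F) (Φ x) (Φ' x w) (Φ' x w') + fderiv 𝕜 F (Φ x) (Φ'' w w') := by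
  have hFΦ : ∀ᶠ p in 𝓝 x, ContDiffAt 𝕜 2 F (Φ p) :=
    hΦ.self_of_nhds.continuousAt.eventually (hF.eventually (by simp))
  have hD : fderiv 𝕜 (F ∘ Φ) =ᶠ[𝓝 x] fun p => (fderiv 𝕜 F (Φ p)).comp (Φ' p) := by
    filter_upwards [hΦ, hFΦ] with p hΦp hFp
    exact ((hFp.differentiableAt two_ne_zero).hasFDerivAt.comp p hΦp).fderiv
  have hdF : DifferentiableAt 𝕜 (fderiv 𝕜 F) (Φ x) :=
    (hF.fderiv_right (m := 1) le_rfl).differentiableAt one_ne_zero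
  have hcomp : HasFDerivAt (fun p => (fderiv 𝕜 F (Φ p)).comp (Φ' p)) _ x :=
    (hdF.hasFDerivAt.comp x hΦ.self_of_nhds).clm_comp hΦ'
  rw [hD.fderiv_eq, hcomp.fderiv]
  simp [add_comm]

end SecondDerivative

section SubstitutionInFirstVariable

variable {E G : Type*} [NormedAddCommGroup E] [NormedSpace ℝ E] [NormedAddCommGroup G]
  [NormedSpace ℝ G]

theorem fderiv_fderiv_comp_sub_fst_apply {F : ℝ × E → G} {τ : ℝ × E → ℝ} {x : ℝ × E}
    (hF : ContDiffAt ℝ 2 F (x.1 - τ x, x.2)) (hτ : ContDiffAt ℝ 2 τ x) (w : ℝ × E) :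
    fderiv ℝ (fderiv ℝ fun p => F (p.1 - τ p, p.2)) x w w
      = fderiv ℝ (fderiv ℝ F) (x.1 - τ x, x.2) (w.1 - fderiv ℝ τ x w, w.2)
          (w.1 - fderiv ℝ τ x w, w.2)
        - fderiv ℝ F (x.1 - τ x, x.2) (fderiv ℝ (fderiv ℝ τ) x w w, 0) := by
  set ι := ContinuousLinearMap.inl ℝ ℝ E
  have hΦ (p : ℝ × E) : p - ι (τ p) = (p.1 - τ p, p.2) := by ext <;> simp [ι]
  have hΦ' : ∀ᶠ p in 𝓝 x, HasFDerivAt (fun p => p - ι (τ p))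
      (ContinuousLinearMap.id ℝ (ℝ × E) - ι.comp (fderiv ℝ τ p)) p := by
    filter_upwards [hτ.eventually (by simp)] with p hp
    exact (hasFDerivAt_id p).sub
      (ι.hasFDerivAt.comp p (hp.differentiableAt two_ne_zero).hasFDerivAt)
  have hdτ : DifferentiableAt ℝ (fderiv ℝ τ) x :=
    (hτ.fderiv_right (m := 1) le_rfl).differentiableAt one_ne_zero
  have hΦ'' : HasFDerivAt (fun p => ContinuousLinearMap.id ℝ (ℝ × E) - ι.comp (fderiv ℝ τ p))
      (0 - (ContinuousLinearMap.compL ℝ (ℝ × E) ℝ (ℝ × E) ι).comp (fderiv ℝ (fderiv ℝ τ) x)) x :=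
    (hasFDerivAt_const (ContinuousLinearMap.id ℝ (ℝ × E)) x).sub
      ((ContinuousLinearMap.compL ℝ (ℝ × E) ℝ (ℝ × E) ι).hasFDerivAt.comp x hdτ.hasFDerivAt)
  have hchain := fderiv_fderiv_comp_apply (F := F) (hΦ x ▸ hF) hΦ' hΦ'' w w
  simp only [Function.comp_def, hΦ] at hchain
  have hΦ'w : (ContinuousLinearMap.id ℝ (ℝ × E) - ι.comp (fderiv ℝ τ x)) w
      = (w.1 - fderiv ℝ τ x w, w.2) := by
    ext <;> simp [ι]
  have hΦ''w : (0 - (ContinuousLinearMap.compL ℝ (ℝ × E) ℝ (ℝ × E) ι).comp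
      (fderiv ℝ (fderiv ℝ τ) x)) w w = -(fderiv ℝ (fderiv ℝ τ) x w w, 0) := by
    ext <;> simp [ι]
  rw [hchain, hΦ'w, hΦ''w, map_neg, ← sub_eq_add_neg]

theorem apply_mk_zero_eq_smul (L : ℝ × E →L[ℝ] G) (c : ℝ) : L (c, 0) = c • L (1, 0) := by
  rw [← map_smul, Prod.smul_mk, smul_eq_mul, mul_one, smul_zero]

theorem apply_mk_apply_mk_of_symm (B : ℝ × E →L[ℝ] ℝ × E →L[ℝ] ℝ) (a : ℝ) (e : E)
    (hB : B (1, 0) (0, e) = B (0, e) (1, 0)) :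
    B (a, e) (a, e) = a ^ 2 * B (1, 0) (1, 0) + 2 * a * B (0, e) (1, 0) + B (0, e) (0, e) := by
  rw [show ((a, e) : ℝ × E) = a • (1, 0) + (0, e) by simp]
  simp only [map_add, map_smul, add_apply, smul_apply, smul_eq_mul, hB]
  ring

end SubstitutionInFirstVariable

section PartialDerivatives

variable {n : ℕ} (f : ℝ → EuclideanSpace ℝ (Fin n) → ℝ)

theorem uncurry_partialT_one :
    uncurry (partialT n f 1) = fun p => lineDeriv ℝ (uncurry f) p (1, 0) := by
  ext ⟨t, y⟩
  simp only [uncurry_apply_pair, partialT, iteratedDeriv_one, lineDeriv, Prod.mk_add_mk,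
    Prod.smul_mk, smul_eq_mul, mul_one, smul_zero, add_zero]
  simpa using (deriv_comp_const_add (f := fun t' => f t' y) t 0).symm

theorem uncurry_partialY (j : Fin n) :
    uncurry (partialY n j f) =
      fun p => lineDeriv ℝ (uncurry f) p (0, EuclideanSpace.single j 1) := by
  ext ⟨t, y⟩
  have hsingle (h : ℝ) : h • EuclideanSpace.single j (1 : ℝ) = EuclideanSpace.single j h := by
    ext i; simp
  simp [partialY, lineDeriv, hsingle]

theorem partialT_two : partialT n f 2 = partialT n (partialT n f 1) 1 := by
  ext t y
  simp [partialT, iteratedDeriv_succ]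

variable {f} {t : ℝ} {y : EuclideanSpace ℝ (Fin n)}

theorem partialT_one_eq_fderiv (hf : DifferentiableAt ℝ (uncurry f) (t, y)) :
    partialT n f 1 t y = fderiv ℝ (uncurry f) (t, y) (1, 0) := by
  rw [← uncurry_apply_pair (partialT n f 1), uncurry_partialT_one]
  exact hf.lineDeriv_eq_fderiv

theorem partialY_eq_fderiv (j : Fin n) (hf : DifferentiableAt ℝ (uncurry f) (t, y)) :
    partialY n j f t y = fderiv ℝ (uncurry f) (t, y) (0, EuclideanSpace.single j 1) := by
  rw [← uncurry_apply_pair (partialY n j f), uncurry_partialY]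
  exact hf.lineDeriv_eq_fderiv

theorem partialT_two_eq_fderiv_fderiv (hf : ContDiffAt ℝ 2 (uncurry f) (t, y)) :
    partialT n f 2 t y = fderiv ℝ (fderiv ℝ (uncurry f)) (t, y) (1, 0) (1, 0) := by
  rw [partialT_two, ← uncurry_apply_pair (partialT n _ 1), uncurry_partialT_one,
    uncurry_partialT_one]
  exact lineDeriv_lineDeriv_of_contDiffAt hf _ _

theorem partialY_partialY_eq_fderiv_fderiv (j : Fin n)
    (hf : ContDiffAt ℝ 2 (uncurry f) (t, y)) :
    partialY n j (partialY n j f) t y = fderiv ℝ (fderiv ℝ (uncurry f)) (t, y)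
      (0, EuclideanSpace.single j 1) (0, EuclideanSpace.single j 1) := by
  rw [← uncurry_apply_pair (partialY n j _), uncurry_partialY, uncurry_partialY]
  exact lineDeriv_lineDeriv_of_contDiffAt hf _ _

theorem partialY_partialT_one_eq_fderiv_fderiv (j : Fin n)
    (hf : ContDiffAt ℝ 2 (uncurry f) (t, y)) :
    partialY n j (partialT n f 1) t y = fderiv ℝ (fderiv ℝ (uncurry f)) (t, y)
      (0, EuclideanSpace.single j 1) (1, 0) := by
  rw [← uncurry_apply_pair (partialY n j _), uncurry_partialY, uncurry_partialT_one]
  exact lineDeriv_lineDeriv_of_contDiffAt hf _ _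

end PartialDerivatives

/-- Read `c, A, M j, N j` as `u_t, u_tt, u_{t y_j}, u_{y_j y_j}` and `a, b j, a₂, b₂ j` as
`τ_s, τ_{y_j}, τ_ss, τ_{y_j y_j}`. -/
theorem tau_form_nonpos_of_laplacian_le {ι : Type*} [Fintype ι] {c A a a₂ : ℝ}
    {M N b b₂ : ι → ℝ} (hc : 0 < c)
    (h : A + ∑ j, N j ≤
      (1 - a) ^ 2 * A - c * a₂ + ∑ j, (b j ^ 2 * A - 2 * b j * M j + N j - c * b₂ j)) :
    a₂ + ∑ j, b₂ j - A / c * (a ^ 2 + ∑ j, b j ^ 2 - 2 * a) + 2 * ∑ j, M j / c * b j ≤ 0 := by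
  simp only [Finset.sum_sub_distrib, Finset.sum_add_distrib, ← Finset.mul_sum, ← Finset.sum_mul,
    mul_assoc] at h
  have hMb : ∑ j, M j / c * b j = (∑ j, b j * M j) / c := by
    rw [Finset.sum_div]
    exact Finset.sum_congr rfl fun j _ => by ring
  rw [hMb]
  refine nonpos_of_mul_nonpos_right ?_ hc
  field_simp
  linarith

section SubstitutionFormulas

variable {n : ℕ} {u v τ : ℝ → EuclideanSpace ℝ (Fin n) → ℝ} {s : ℝ}
  {y : EuclideanSpace ℝ (Fin n)}

theorem fderiv_fderiv_uncurry_of_eq_comp_sub_fst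
    (hu : ContDiffAt ℝ 2 (uncurry u) (s - τ s y, y))
    (hτ : ContDiffAt ℝ 2 (uncurry τ) (s, y))
    (hv : uncurry v =ᶠ[𝓝 (s, y)] fun p => u (p.1 - uncurry τ p) p.2)
    (w : ℝ × EuclideanSpace ℝ (Fin n)) :
    fderiv ℝ (fderiv ℝ (uncurry v)) (s, y) w w
      = fderiv ℝ (fderiv ℝ (uncurry u)) (s - τ s y, y)
          (w.1 - fderiv ℝ (uncurry τ) (s, y) w, w.2)
          (w.1 - fderiv ℝ (uncurry τ) (s, y) w, w.2)
        - fderiv ℝ (uncurry u) (s - τ s y, y)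
          (fderiv ℝ (fderiv ℝ (uncurry τ)) (s, y) w w, 0) := by
  rw [hv.fderiv.fderiv_eq]
  exact fderiv_fderiv_comp_sub_fst_apply (F := uncurry u) hu hτ w

theorem contDiffAt_uncurry_of_eq_comp_sub_fst
    (hu : ContDiffAt ℝ 2 (uncurry u) (s - τ s y, y))
    (hτ : ContDiffAt ℝ 2 (uncurry τ) (s, y))
    (hv : uncurry v =ᶠ[𝓝 (s, y)] fun p => u (p.1 - uncurry τ p) p.2) :
    ContDiffAt ℝ 2 (uncurry v) (s, y) := by
  have hcomp := hu.comp (s, y) ((contDiffAt_fst.sub hτ).prodMk contDiffAt_snd)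
  exact hcomp.congr_of_eventuallyEq hv

theorem partialT_two_of_eq_comp_sub_fst
    (hu : ContDiffAt ℝ 2 (uncurry u) (s - τ s y, y))
    (hτ : ContDiffAt ℝ 2 (uncurry τ) (s, y))
    (hv : uncurry v =ᶠ[𝓝 (s, y)] fun p => u (p.1 - uncurry τ p) p.2) :
    partialT n v 2 s y = (1 - partialT n τ 1 s y) ^ 2 * partialT n u 2 (s - τ s y) y
      - partialT n u 1 (s - τ s y) y * partialT n τ 2 s y := by
  rw [partialT_two_eq_fderiv_fderiv (contDiffAt_uncurry_of_eq_comp_sub_fst hu hτ hv),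
    fderiv_fderiv_uncurry_of_eq_comp_sub_fst hu hτ hv,
    partialT_two_eq_fderiv_fderiv hu, partialT_two_eq_fderiv_fderiv hτ,
    partialT_one_eq_fderiv (hu.differentiableAt two_ne_zero),
    partialT_one_eq_fderiv (hτ.differentiableAt two_ne_zero),
    apply_mk_zero_eq_smul (fderiv ℝ (fderiv ℝ (uncurry u)) _),
    apply_mk_zero_eq_smul (fderiv ℝ (uncurry u) _), smul_apply,
    apply_mk_zero_eq_smul (fderiv ℝ (fderiv ℝ (uncurry u)) _ (1, 0))]
  simp only [smul_eq_mul]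
  ring

theorem partialY_partialY_of_eq_comp_sub_fst (j : Fin n)
    (hu : ContDiffAt ℝ 2 (uncurry u) (s - τ s y, y))
    (hτ : ContDiffAt ℝ 2 (uncurry τ) (s, y))
    (hv : uncurry v =ᶠ[𝓝 (s, y)] fun p => u (p.1 - uncurry τ p) p.2) :
    partialY n j (partialY n j v) s y
      = partialY n j τ s y ^ 2 * partialT n u 2 (s - τ s y) y
        - 2 * partialY n j τ s y * partialY n j (partialT n u 1) (s - τ s y) y
        + partialY n j (partialY n j u) (s - τ s y) y
        - partialT n u 1 (s - τ s y) y * partialY n j (partialY n j τ) s y := by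
  rw [partialY_partialY_eq_fderiv_fderiv j (contDiffAt_uncurry_of_eq_comp_sub_fst hu hτ hv),
    fderiv_fderiv_uncurry_of_eq_comp_sub_fst hu hτ hv,
    partialT_two_eq_fderiv_fderiv hu, partialY_partialT_one_eq_fderiv_fderiv j hu,
    partialY_partialY_eq_fderiv_fderiv j hu, partialY_partialY_eq_fderiv_fderiv j hτ,
    partialT_one_eq_fderiv (hu.differentiableAt two_ne_zero),
    partialY_eq_fderiv j (hτ.differentiableAt two_ne_zero)]
  have hsymm := (hu.isSymmSndFDerivAt (by simp)) (1, 0) (0, EuclideanSpace.single j 1)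
  simp only [zero_sub]
  rw [apply_mk_apply_mk_of_symm _ _ _ hsymm, apply_mk_zero_eq_smul (fderiv ℝ (uncurry u) _),
    smul_eq_mul]
  ring

end SubstitutionFormulas

theorem tau_elliptic_inequality_general
    (n : ℕ)
    (u v : ℝ → EuclideanSpace ℝ (Fin n) → ℝ)
    (U : Set (ℝ × EuclideanSpace ℝ (Fin n)))
    (hUopen : IsOpen U) (hUsub : closure (domTY n) ⊆ U)
    (hu : ContDiffOn ℝ (⊤ : ℕ∞) (Function.uncurry u) U)
    (hut : ∀ p ∈ domTY n, 0 < partialT n u 1 p.1 p.2)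
    (hmain : ∀ (t s : ℝ) (y : EuclideanSpace ℝ (Fin n)), 0 < t → t ≤ s → s < 1 → ‖y‖ < 1 →
      u t y = v s y → lapTY n u t y ≤ lapTY n v s y)
    (T : ℝ → EuclideanSpace ℝ (Fin n) → ℝ)
    (W : Set (ℝ × EuclideanSpace ℝ (Fin n)))
    (hWopen : IsOpen W)
    (hWsub : W ⊆ {p : ℝ × EuclideanSpace ℝ (Fin n) | 0 < p.1 ∧ p.1 < 1 ∧ ‖p.2‖ < 1})
    (hT2 : ContDiffOn ℝ 2 (Function.uncurry T) W)
    (hTval : ∀ p ∈ W, 0 < T p.1 p.2 ∧ T p.1 p.2 ≤ p.1 ∧ u (T p.1 p.2) p.2 = v p.1 p.2) :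
    ∀ p ∈ W,
      lapTY n (fun s y => s - T s y) p.1 p.2
        - (partialT n u 2 (T p.1 p.2) p.2 / partialT n u 1 (T p.1 p.2) p.2) *
            ((partialT n (fun s y => s - T s y) 1 p.1 p.2) ^ 2
              + (∑ j : Fin n, (partialY n j (fun s y => s - T s y) p.1 p.2) ^ 2)
              - 2 * partialT n (fun s y => s - T s y) 1 p.1 p.2)
        + 2 * ∑ j : Fin n,
            (partialY n j (partialT n u 1) (T p.1 p.2) p.2 / partialT n u 1 (T p.1 p.2) p.2) *
              partialY n j (fun s y => s - T s y) p.1 p.2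
      ≤ 0 := by
  intro p hp
  obtain ⟨s, y⟩ := p
  obtain ⟨-, hs, hy⟩ := hWsub hp
  obtain ⟨hT0, hTs, huv⟩ := hTval (s, y) hp
  have hΩ : (T s y, y) ∈ domTY n := ⟨hT0, hTs.trans_lt hs, hy⟩
  have hu2 : ContDiffAt ℝ 2 (uncurry u) (s - (s - T s y), y) := by
    rw [sub_sub_cancel]
    exact (hu.contDiffAt (hUopen.mem_nhds (hUsub (subset_closure hΩ)))).of_le (by norm_cast)
  have hτ2 : ContDiffAt ℝ 2 (uncurry fun s y => s - T s y) (s, y) :=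
    contDiffAt_fst.sub (hT2.contDiffAt (hWopen.mem_nhds hp))
  have hvτ : uncurry v =ᶠ[𝓝 (s, y)]
      fun p => u (p.1 - uncurry (fun s y => s - T s y) p) p.2 := by
    filter_upwards [hWopen.mem_nhds hp] with ⟨s', y'⟩ hp'
    simpa using (hTval _ hp').2.2.symm
  have hlap := hmain (T s y) s y hT0 hTs hs hy huv
  simp only [lapTY, partialT_two_of_eq_comp_sub_fst hu2 hτ2 hvτ,
    partialY_partialY_of_eq_comp_sub_fst _ hu2 hτ2 hvτ, sub_sub_cancel] at hlap
  rw [lapTY]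
  exact tau_form_nonpos_of_laplacian_le (hut _ hΩ) hlap

/-- The elliptic differential inequality (3.2) for τ = s - t(s,y). -/
theorem tau_elliptic_inequality
    (n : ℕ) (hn : 1 ≤ n)
    (u v : ℝ → EuclideanSpace ℝ (Fin n) → ℝ)
    (U : Set (ℝ × EuclideanSpace ℝ (Fin n)))
    (hUopen : IsOpen U) (hUsub : closure (domTY n) ⊆ U)
    (hu : ContDiffOn ℝ (⊤ : ℕ∞) (Function.uncurry u) U)
    (hv : ContDiffOn ℝ (⊤ : ℕ∞) (Function.uncurry v) U)
    (huv : ∀ p ∈ closure (domTY n), v p.1 p.2 ≤ u p.1 p.2)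
    (hupos : ∀ p ∈ domTY n, 0 < u p.1 p.2)
    (hvpos : ∀ p ∈ domTY n, 0 < v p.1 p.2)
    (hut : ∀ p ∈ domTY n, 0 < partialT n u 1 p.1 p.2)
    (hu0 : ∀ y : EuclideanSpace ℝ (Fin n), ‖y‖ < 1 → u 0 y = 0)
    (hmain : ∀ (t s : ℝ) (y : EuclideanSpace ℝ (Fin n)), 0 < t → t ≤ s → s < 1 → ‖y‖ < 1 →
      u t y = v s y → lapTY n u t y ≤ lapTY n v s y)
    (T : ℝ → EuclideanSpace ℝ (Fin n) → ℝ)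
    (W : Set (ℝ × EuclideanSpace ℝ (Fin n)))
    (hWopen : IsOpen W)
    (hWsub : W ⊆ {p : ℝ × EuclideanSpace ℝ (Fin n) | 0 < p.1 ∧ p.1 < 1 ∧ ‖p.2‖ < 1})
    (hT2 : ContDiffOn ℝ 2 (Function.uncurry T) W)
    (hTval : ∀ p ∈ W, 0 < T p.1 p.2 ∧ T p.1 p.2 ≤ p.1 ∧ u (T p.1 p.2) p.2 = v p.1 p.2) :
    ∀ p ∈ W,
      lapTY n (fun s y => s - T s y) p.1 p.2
        - (partialT n u 2 (T p.1 p.2) p.2 / partialT n u 1 (T p.1 p.2) p.2) *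
            ((partialT n (fun s y => s - T s y) 1 p.1 p.2) ^ 2
              + (∑ j : Fin n, (partialY n j (fun s y => s - T s y) p.1 p.2) ^ 2)
              - 2 * partialT n (fun s y => s - T s y) 1 p.1 p.2)
        + 2 * ∑ j : Fin n,
            (partialY n j (partialT n u 1) (T p.1 p.2) p.2 / partialT n u 1 (T p.1 p.2) p.2) *
              partialY n j (fun s y => s - T s y) p.1 p.2
      ≤ 0 :=
  tau_elliptic_inequality_general n u v U hUopen hUsub hu hut hmain T W hWopen hWsub hT2 hTval
end

section
/- Under the higher-dimensional setup (u ≥ v smooth on the closure of Ω = (0,1) × {|y|<1}, u > 0, v > 0, ∂_t u > 0 in Ω, u(0,y) = 0, ∂_t u(0,0) = 0, main Laplacian comparison condition, finite-order vanishing at t = 0), if k = 2, where k and l are the least indices i with ∂_t^i u(0,0) ≠ 0 and ∂_t^i v(0,0) ≠ 0, then l = 2 and ∂_t² v(0,0) = ∂_t² u(0,0). -/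
open Set

/-! Restrict `u` and `v` to the `t`-axis: `φ t = u t 0`, `ψ t = v t 0`. Since `0 < v ≤ u` in `Ω`
and `u` vanishes on `{t = 0}`, so does `v`; hence `0 ≤ ψ ≤ φ` to the right of `0` with
`φ 0 = ψ 0 = φ' 0 = 0`, which forces `ψ' 0 = 0` and `ψ'' 0 ≤ φ'' 0`.

Conversely, for small `t > 0` the intermediate value theorem gives `s ∈ [t, ε]` with
`v s 0 = u t 0`, so `Δu (t, 0) ≤ Δv (s, 0)`; letting `t, ε → 0` gives `Δu (0, 0) ≤ Δv (0, 0)`.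
As `u` and `v` vanish on `{t = 0}`, their tangential second derivatives vanish at the origin, so
these Laplacians are `φ'' 0` and `ψ'' 0`. Hence `ψ'' 0 = φ'' 0 ≠ 0` and `ψ' 0 = 0`, i.e. `l = 2`. -/

open Filter Topology

theorem deriv_le_deriv_of_le_right {f g : ℝ → ℝ} {a : ℝ} (hf : DifferentiableAt ℝ f a)
    (hg : DifferentiableAt ℝ g a) (ha : f a = g a) (hle : ∀ᶠ t in 𝓝[>] a, f t ≤ g t) :
    deriv f a ≤ deriv g a := by
  have hslope {h : ℝ → ℝ} (hh : DifferentiableAt ℝ h a) :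
      Tendsto (slope h a) (𝓝[>] a) (𝓝 (deriv h a)) :=
    (hasDerivAt_iff_tendsto_slope.1 hh.hasDerivAt).mono_left
      (nhdsWithin_mono a fun _ ht => ne_of_gt ht)
  refine le_of_tendsto_of_tendsto (hslope hf) (hslope hg) ?_
  filter_upwards [hle, self_mem_nhdsWithin] with t ht hat
  rw [slope_def_field, slope_def_field, ha]
  exact div_le_div_of_nonneg_right (by linarith) (sub_pos.2 hat).le

theorem iteratedDeriv_two_nonneg_of_nonneg_right {f : ℝ → ℝ} {a : ℝ} (hf : ContDiffAt ℝ 2 f a)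
    (ha : f a = 0) (ha' : deriv f a = 0) (hpos : ∀ᶠ t in 𝓝[>] a, 0 ≤ f t) :
    0 ≤ iteratedDeriv 2 f a := by
  rw [iteratedDeriv_succ, iteratedDeriv_one]
  by_contra! hneg
  have hslope : Tendsto (slope (deriv f) a) (𝓝[>] a) (𝓝 (deriv (deriv f) a)) :=
    (hasDerivAt_iff_tendsto_slope.1
      ((hf.derivWithin (m := 1) le_rfl).differentiableAt one_ne_zero).hasDerivAt).mono_left
      (nhdsWithin_mono a fun _ ht => ne_of_gt ht)
  have hdecr : ∀ᶠ t in 𝓝[>] a, deriv f t < 0 := by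
    filter_upwards [hslope.eventually (gt_mem_nhds hneg), self_mem_nhdsWithin] with t ht hat
    rw [slope_def_field, ha', sub_zero] at ht
    exact neg_of_div_neg_left ht (sub_pos.2 hat).le
  have hdiff : ∀ᶠ t in 𝓝 a, DifferentiableAt ℝ f t :=
    (hf.eventually (by simp)).mono fun _ ht => ht.differentiableAt two_ne_zero
  obtain ⟨b, hab, hb⟩ := mem_nhdsGT_iff_exists_Ioo_subset.1
    (hdecr.and (hpos.and (nhdsWithin_le_nhds hdiff)))
  obtain ⟨c, hac, hcb⟩ := exists_between (mem_Ioi.1 hab)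
  have hsub : Ioc a c ⊆ Ioo a b := fun t ht => ⟨ht.1, ht.2.trans_lt hcb⟩
  have hcont : ContinuousOn f (Icc a c) := by
    intro t ht
    rcases ht.1.eq_or_lt with rfl | hat
    · exact hf.continuousAt.continuousWithinAt
    · exact (hb (hsub ⟨hat, ht.2⟩)).2.2.continuousAt.continuousWithinAt
  obtain ⟨ξ, hξ, hξslope⟩ := exists_deriv_eq_slope f hac hcont
    fun t ht => (hb (hsub (Ioo_subset_Ioc_self ht))).2.2.differentiableWithinAt
  have hneg_slope := (hb (hsub (Ioo_subset_Ioc_self hξ))).1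
  rw [hξslope, ha, sub_zero] at hneg_slope
  exact (neg_of_div_neg_left hneg_slope (sub_pos.2 hac).le).not_ge (hb (hsub ⟨hac, le_rfl⟩)).2.1

theorem deriv_eq_zero_and_iteratedDeriv_two_le_of_le_right {φ ψ : ℝ → ℝ} {a : ℝ}
    (hφ : ContDiffAt ℝ 2 φ a) (hψ : ContDiffAt ℝ 2 ψ a) (hφa : φ a = 0) (hψa : ψ a = 0)
    (hφ' : deriv φ a = 0) (hψφ : ∀ᶠ t in 𝓝[>] a, 0 ≤ ψ t ∧ ψ t ≤ φ t) :
    deriv ψ a = 0 ∧ iteratedDeriv 2 ψ a ≤ iteratedDeriv 2 φ a := by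
  have hφd := hφ.differentiableAt two_ne_zero
  have hψd := hψ.differentiableAt two_ne_zero
  have hψ' : deriv ψ a = 0 := by
    refine le_antisymm (hφ' ▸ deriv_le_deriv_of_le_right hψd hφd (hψa.trans hφa.symm)
      (hψφ.mono fun _ h => h.2)) ?_
    simpa using deriv_le_deriv_of_le_right (differentiableAt_const 0) hψd hψa.symm
      (hψφ.mono fun _ h => h.1)
  refine ⟨hψ', ?_⟩
  have hnonneg := iteratedDeriv_two_nonneg_of_nonneg_right (hφ.sub hψ) (by simp [hφa, hψa])
    (by rw [deriv_fun_sub hφd hψd, hφ', hψ', sub_zero]) (hψφ.mono fun _ h => sub_nonneg.2 h.2)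
  rw [iteratedDeriv_fun_sub hφ hψ] at hnonneg
  linarith

theorem le_of_forall_eq_imp_le_right {φ ψ A B : ℝ → ℝ} {a b α β : ℝ} (hab : a < b)
    (hφ : Tendsto φ (𝓝[>] a) (𝓝 0)) (hψ : ContinuousOn ψ (Ioo a b))
    (hψpos : ∀ t ∈ Ioo a b, 0 < ψ t) (hψφ : ∀ t ∈ Ioo a b, ψ t ≤ φ t)
    (hA : Tendsto A (𝓝[>] a) (𝓝 α)) (hB : Tendsto B (𝓝[>] a) (𝓝 β))
    (hAB : ∀ t s, a < t → t ≤ s → s < b → φ t = ψ s → A t ≤ B s) : α ≤ β := by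
  refine le_of_forall_pos_le_add fun η hη => ?_
  obtain ⟨c, hac, hc⟩ := mem_nhdsGT_iff_exists_Ioo_subset.1
    (hB.eventually (gt_mem_nhds (lt_add_of_pos_right β hη)))
  obtain ⟨ε, haε, hε⟩ := exists_between (lt_min hac hab)
  have hεab : ε ∈ Ioo a b := ⟨haε, hε.trans_le (min_le_right _ _)⟩
  refine le_of_tendsto hA ?_
  filter_upwards [Ioo_mem_nhdsGT haε, hφ.eventually (gt_mem_nhds (hψpos ε hεab))]
    with t ht hφt
  have htε : Icc t ε ⊆ Ioo a b := fun s hs => ⟨ht.1.trans_le hs.1, hs.2.trans_lt hεab.2⟩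
  obtain ⟨s, hs, hψs⟩ := intermediate_value_Icc ht.2.le (hψ.mono htε)
    ⟨hψφ t (htε (left_mem_Icc.2 ht.2.le)), hφt.le⟩
  calc A t ≤ B s := hAB t s ht.1 hs.1 (htε hs).2 hψs.symm
    _ ≤ β + η := (hc ⟨(htε hs).1, hs.2.trans_lt (hε.trans_le (min_le_left _ _))⟩).le

section LineDeriv

variable {𝕜 : Type*} [NontriviallyNormedField 𝕜] {E : Type*} [NormedAddCommGroup E]
  [NormedSpace 𝕜 E] {G : Type*} [NormedAddCommGroup G] [NormedSpace 𝕜 G]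

theorem lineDeriv_one_zero (f : 𝕜 × E → G) (t : 𝕜) (y : E) :
    lineDeriv 𝕜 f (t, y) (1, 0) = deriv (fun s => f (s, y)) t := by
  simpa [lineDeriv] using deriv_comp_const_add (f := fun s => f (s, y)) (a := t) (x := 0)

theorem lineDeriv_zero_left (f : 𝕜 × E → G) (t : 𝕜) (y w : E) :
    lineDeriv 𝕜 f (t, y) (0, w) = deriv (fun s => f (t, y + s • w)) (0 : 𝕜) := by
  simp [lineDeriv]

theorem continuousOn_lineDeriv_lineDeriv {f : E → G} {U : Set E} (hU : IsOpen U)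
    (hf : ContDiffOn 𝕜 2 f U) (v : E) :
    ContinuousOn (fun x => lineDeriv 𝕜 (fun y => lineDeriv 𝕜 f y v) x v) U := by
  have hf' : ContDiffOn 𝕜 1 (fun y => fderiv 𝕜 f y v) U :=
    (ContinuousLinearMap.apply 𝕜 G v).contDiff.comp_contDiffOn
      (hf.fderiv_of_isOpen hU (by norm_num))
  have hcont : ContinuousOn (fun x => fderiv 𝕜 (fun y => fderiv 𝕜 f y v) x v) U :=
    (ContinuousLinearMap.apply 𝕜 G v).continuous.comp_continuousOn
      (hf'.continuousOn_fderiv_of_isOpen hU le_rfl)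
  refine hcont.congr fun x hx => ?_
  have heq : (fun y => lineDeriv 𝕜 f y v) =ᶠ[𝓝 x] fun y => fderiv 𝕜 f y v := by
    filter_upwards [hU.mem_nhds hx] with y hy
    exact ((hf.differentiableOn (by norm_num) y hy).differentiableAt
      (hU.mem_nhds hy)).lineDeriv_eq_fderiv
  rw [heq.lineDeriv_eq]
  exact ((hf'.differentiableOn one_ne_zero x hx).differentiableAt
    (hU.mem_nhds hx)).lineDeriv_eq_fderiv

theorem eqOn_zero_lineDeriv {f : E → G} {s : Set E} {v : E}
    (hs : ∀ x ∈ s, ∀ᶠ t in 𝓝 (0 : 𝕜), x + t • v ∈ s) (hf : EqOn f 0 s) :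
    EqOn (fun x => lineDeriv 𝕜 f x v) 0 s := by
  intro x hx
  have heq : (fun t : 𝕜 => f (x + t • v)) =ᶠ[𝓝 0] fun _ => 0 :=
    (hs x hx).mono fun t ht => hf ht
  simp [lineDeriv, heq.deriv_eq]

theorem ContDiffOn.contDiffAt_slice {k : WithTop ℕ∞} {f : 𝕜 × E → G} {U : Set (𝕜 × E)}
    (hf : ContDiffOn 𝕜 k f U) (hU : IsOpen U) {t : 𝕜} {y : E} (h : (t, y) ∈ U) :
    ContDiffAt 𝕜 k (fun s => f (s, y)) t :=
  (hf.contDiffAt (hU.mem_nhds h)).comp (f := fun s => (s, y)) t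
    (contDiff_prodMk_left y).contDiffAt

end LineDeriv

section Laplacian

variable {n : ℕ}

theorem partialT_two_eq_lineDeriv (f : ℝ → EuclideanSpace ℝ (Fin n) → ℝ) (t : ℝ)
    (y : EuclideanSpace ℝ (Fin n)) :
    partialT n f 2 t y =
      lineDeriv ℝ (fun q => lineDeriv ℝ (Function.uncurry f) q (1, 0)) (t, y) (1, 0) := by
  have hfst : (fun q => lineDeriv ℝ (Function.uncurry f) q (1, 0)) =
      fun q => deriv (fun s => f s q.2) q.1 :=
    funext fun q => lineDeriv_one_zero _ q.1 q.2
  rw [hfst, lineDeriv_one_zero, partialT, iteratedDeriv_succ, iteratedDeriv_one]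

theorem partialY_eq_lineDeriv (j : Fin n) (f : ℝ → EuclideanSpace ℝ (Fin n) → ℝ) (t : ℝ)
    (y : EuclideanSpace ℝ (Fin n)) :
    partialY n j f t y =
      lineDeriv ℝ (Function.uncurry f) (t, y) (0, EuclideanSpace.single j 1) := by
  have hsingle (h : ℝ) : EuclideanSpace.single j h = h • EuclideanSpace.single j (1 : ℝ) := by
    ext i; by_cases hij : i = j <;> simp [hij]
  simp only [lineDeriv_zero_left, partialY, Function.uncurry_apply_pair, ← hsingle]

theorem partialY_partialY_eq_lineDeriv (j : Fin n) (f : ℝ → EuclideanSpace ℝ (Fin n) → ℝ)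
    (t : ℝ) (y : EuclideanSpace ℝ (Fin n)) :
    partialY n j (partialY n j f) t y =
      lineDeriv ℝ (fun q => lineDeriv ℝ (Function.uncurry f) q (0, EuclideanSpace.single j 1))
        (t, y) (0, EuclideanSpace.single j 1) := by
  rw [partialY_eq_lineDeriv]
  congr 1
  exact funext fun q => partialY_eq_lineDeriv j f q.1 q.2

theorem continuousAt_lapTY {f : ℝ → EuclideanSpace ℝ (Fin n) → ℝ}
    {U : Set (ℝ × EuclideanSpace ℝ (Fin n))} (hU : IsOpen U)
    (hf : ContDiffOn ℝ 2 (Function.uncurry f) U) {t : ℝ} {y : EuclideanSpace ℝ (Fin n)}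
    (h : (t, y) ∈ U) : ContinuousAt (fun s => lapTY n f s y) t := by
  have hcont : ContinuousOn (fun p => lapTY n f p.1 p.2) U := by
    simp only [lapTY, partialT_two_eq_lineDeriv, partialY_partialY_eq_lineDeriv]
    exact (continuousOn_lineDeriv_lineDeriv hU hf _).add
      (continuousOn_finsetSum _ fun j _ => continuousOn_lineDeriv_lineDeriv hU hf _)
  exact (hcont.continuousAt (hU.mem_nhds h)).comp (f := fun s => (s, y))
    (continuous_id.prodMk continuous_const).continuousAt

theorem lapTY_zero_zero_eq_partialT {f : ℝ → EuclideanSpace ℝ (Fin n) → ℝ}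
    (hf : ∀ y : EuclideanSpace ℝ (Fin n), ‖y‖ < 1 → f 0 y = 0) :
    lapTY n f 0 0 = partialT n f 2 0 0 := by
  set s : Set (ℝ × EuclideanSpace ℝ (Fin n)) := {q | q.1 = 0 ∧ ‖q.2‖ < 1}
  have hs (j : Fin n) : ∀ q ∈ s, ∀ᶠ h in 𝓝 (0 : ℝ),
      q + h • ((0 : ℝ), EuclideanSpace.single j (1 : ℝ)) ∈ s := by
    rintro ⟨t, y⟩ ⟨rfl, hy⟩
    have hcont : Continuous fun h : ℝ => ‖y + h • EuclideanSpace.single j (1 : ℝ)‖ := by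
      fun_prop
    filter_upwards [hcont.continuousAt.eventually_lt continuousAt_const (by simpa using hy)]
      with h hh
    exact ⟨by simp, by simpa using hh⟩
  have hfs : EqOn (Function.uncurry f) 0 s := fun q hq => by
    obtain ⟨t, y⟩ := q
    obtain ⟨rfl, hy⟩ := hq
    exact hf y hy
  have hzero : ((0 : ℝ), (0 : EuclideanSpace ℝ (Fin n))) ∈ s := by simp [s]
  rw [lapTY, Finset.sum_eq_zero fun j _ => ?_, add_zero]
  rw [partialY_partialY_eq_lineDeriv]
  exact eqOn_zero_lineDeriv (hs j) (eqOn_zero_lineDeriv (hs j) hfs) hzero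

end Laplacian

theorem isLeast_two_of_eq_zero_of_ne_zero {M : Type*} [Zero M] {f : ℕ → M} (h1 : f 1 = 0)
    (h2 : f 2 ≠ 0) : IsLeast {i | 1 ≤ i ∧ f i ≠ 0} 2 := by
  refine ⟨⟨one_le_two, h2⟩, fun i ⟨hi1, hi⟩ => ?_⟩
  by_contra! hi2
  obtain rfl : i = 1 := by omega
  exact hi h1

theorem closure_domTY (n : ℕ) : closure (domTY n) = Icc 0 1 ×ˢ Metric.closedBall 0 1 := by
  have h : domTY n = Ioo 0 1 ×ˢ Metric.ball 0 1 := by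
    ext p; simp [domTY, and_assoc]
  rw [h, closure_prod_eq, closure_Ioo zero_ne_one, closure_ball _ one_ne_zero]

theorem stepA_k_two_general
    (n : ℕ)
    (u v : ℝ → EuclideanSpace ℝ (Fin n) → ℝ)
    (U : Set (ℝ × EuclideanSpace ℝ (Fin n)))
    (hUopen : IsOpen U) (hUsub : closure (domTY n) ⊆ U)
    (hu : ContDiffOn ℝ (⊤ : ℕ∞) (Function.uncurry u) U)
    (hv : ContDiffOn ℝ (⊤ : ℕ∞) (Function.uncurry v) U)
    (huv : ∀ p ∈ closure (domTY n), v p.1 p.2 ≤ u p.1 p.2)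
    (hvpos : ∀ p ∈ domTY n, 0 < v p.1 p.2)
    (hu0 : ∀ y : EuclideanSpace ℝ (Fin n), ‖y‖ < 1 → u 0 y = 0)
    (hut0 : partialT n u 1 0 0 = 0)
    (hmain : ∀ (t s : ℝ) (y : EuclideanSpace ℝ (Fin n)), 0 < t → t ≤ s → s < 1 → ‖y‖ < 1 →
      u t y = v s y → lapTY n u t y ≤ lapTY n v s y)
    (hk : IsLeast {i : ℕ | 1 ≤ i ∧ partialT n u i 0 0 ≠ 0} 2) :
    IsLeast {i : ℕ | 1 ≤ i ∧ partialT n v i 0 0 ≠ 0} 2 ∧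
      partialT n v 2 0 0 = partialT n u 2 0 0 := by
  have hu2 : ContDiffOn ℝ 2 (Function.uncurry u) U := hu.of_le (by norm_cast)
  have hv2 : ContDiffOn ℝ 2 (Function.uncurry v) U := hv.of_le (by norm_cast)
  have hbottom {y : EuclideanSpace ℝ (Fin n)} (hy : ‖y‖ < 1) :
      ((0 : ℝ), y) ∈ closure (domTY n) := by
    rw [closure_domTY]; exact ⟨⟨le_rfl, zero_le_one⟩, by simpa using hy.le⟩
  have hv0 (y : EuclideanSpace ℝ (Fin n)) (hy : ‖y‖ < 1) : v 0 y = 0 :=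
    le_antisymm (by simpa [hu0 y hy] using huv _ (hbottom hy)) <|
      ContinuousWithinAt.closure_le (hbottom hy) continuousWithinAt_const
        ((hv2.continuousOn.mono hUsub _ (hbottom hy)).mono subset_closure)
        fun p hp => (hvpos p hp).le
  have hΩ (t : ℝ) (ht : t ∈ Ioo 0 1) : ((t, 0) : ℝ × EuclideanSpace ℝ (Fin n)) ∈ domTY n :=
    ⟨ht.1, ht.2, by simp⟩
  have h0U : ((0 : ℝ), (0 : EuclideanSpace ℝ (Fin n))) ∈ U := hUsub (hbottom (by simp))
  rw [partialT, iteratedDeriv_one] at hut0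
  obtain ⟨hψ', hle⟩ := deriv_eq_zero_and_iteratedDeriv_two_le_of_le_right
    (hu2.contDiffAt_slice hUopen h0U) (hv2.contDiffAt_slice hUopen h0U)
    (hu0 0 (by simp)) (hv0 0 (by simp)) hut0 <| by
      filter_upwards [Ioo_mem_nhdsGT one_pos] with t ht
      exact ⟨(hvpos _ (hΩ t ht)).le, huv _ (subset_closure (hΩ t ht))⟩
  have hge : partialT n u 2 0 0 ≤ partialT n v 2 0 0 := by
    rw [← lapTY_zero_zero_eq_partialT hu0, ← lapTY_zero_zero_eq_partialT hv0]
    refine le_of_forall_eq_imp_le_right one_pos ?_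
      (fun t ht => (hv2.contDiffAt_slice hUopen (hUsub (subset_closure (hΩ t ht)))).continuousAt
        |>.continuousWithinAt)
      (fun t ht => hvpos _ (hΩ t ht)) (fun t ht => huv _ (subset_closure (hΩ t ht)))
      (continuousAt_lapTY hUopen hu2 h0U).continuousWithinAt
      (continuousAt_lapTY hUopen hv2 h0U).continuousWithinAt
      fun t s ht hts hs => hmain t s 0 ht hts hs (by simp)
    simpa [ContinuousWithinAt, hu0 0 (by simp)] using
      (hu2.contDiffAt_slice hUopen h0U).continuousAt.continuousWithinAt (s := Ioi 0)
  have heq : partialT n v 2 0 0 = partialT n u 2 0 0 := le_antisymm hle hge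
  exact ⟨isLeast_two_of_eq_zero_of_ne_zero (f := fun i => partialT n v i 0 0)
    (by rw [partialT, iteratedDeriv_one]; exact hψ') (heq ▸ hk.1.2), heq⟩

/-- (6.1), Step A for k = 2: l = 2 and b₂(0) = a₂(0). -/
theorem stepA_k_two
    (n : ℕ) (hn : 1 ≤ n)
    (u v : ℝ → EuclideanSpace ℝ (Fin n) → ℝ)
    (U : Set (ℝ × EuclideanSpace ℝ (Fin n)))
    (hUopen : IsOpen U) (hUsub : closure (domTY n) ⊆ U)
    (hu : ContDiffOn ℝ (⊤ : ℕ∞) (Function.uncurry u) U)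
    (hv : ContDiffOn ℝ (⊤ : ℕ∞) (Function.uncurry v) U)
    (huv : ∀ p ∈ closure (domTY n), v p.1 p.2 ≤ u p.1 p.2)
    (hupos : ∀ p ∈ domTY n, 0 < u p.1 p.2)
    (hvpos : ∀ p ∈ domTY n, 0 < v p.1 p.2)
    (hut : ∀ p ∈ domTY n, 0 < partialT n u 1 p.1 p.2)
    (hu0 : ∀ y : EuclideanSpace ℝ (Fin n), ‖y‖ < 1 → u 0 y = 0)
    (hut0 : partialT n u 1 0 0 = 0)
    (hmain : ∀ (t s : ℝ) (y : EuclideanSpace ℝ (Fin n)), 0 < t → t ≤ s → s < 1 → ‖y‖ < 1 →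
      u t y = v s y → lapTY n u t y ≤ lapTY n v s y)
    (hk : IsLeast {i : ℕ | 1 ≤ i ∧ partialT n u i 0 0 ≠ 0} 2)
    (hvfin : ∃ i : ℕ, 1 ≤ i ∧ partialT n v i 0 0 ≠ 0) :
    IsLeast {i : ℕ | 1 ≤ i ∧ partialT n v i 0 0 ≠ 0} 2 ∧
      partialT n v 2 0 0 = partialT n u 2 0 0 :=
  stepA_k_two_general n u v U hUopen hUsub hu hv huv hvpos hu0 hut0 hmain hk
end

section
/- Let b > 0 and let u ≥ v be positive functions on (0,b), with u ∈ C³((0,b)) ∩ C¹([0,b]), v ∈ C²((0,b)) ∩ C¹([0,b]), u(0) = u'(0) = 0, u' > 0 on (0,b), and the main condition: whenever u(t) = v(s) with 0 < t ≤ s < b, then u''(t) ≤ v''(s). If in addition v' ≥ 0 on (0,b), then u ≡ v on [0,b]. -/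
/-!
For `s ∈ (0, b)` let `T s` be the point with `u (T s) = v s`; it exists and satisfies
`0 < T s ≤ s` because `u` increases from `u 0 = 0` and `0 < v ≤ u`. Along this matching the energy
`u'(T s)² - v'(s)²` has derivative `2 v'(s) (u''(T s) - v''(s)) ≤ 0`, and as `s → 0⁺` it is
bounded by `u'(T s)² → u'(0)² = 0`; hence `u'(T s) ≤ v'(s)`. Then `T' = v' / u'(T ·) ≥ 1`, so
`s - T s` is nonincreasing, nonnegative and tends to `0` at `0⁺`, which forces `T s = s`,
i.e. `u = v`.
-/

open Set

open Filter Function Topology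

lemma ContDiffOn.hasDerivAt_deriv {f : ℝ → ℝ} {s : Set ℝ} {n : WithTop ℕ∞} {x : ℝ}
    (hf : ContDiffOn ℝ n f s) (hs : IsOpen s) (hn : n ≠ 0) (hx : x ∈ s) :
    HasDerivAt f (deriv f x) x :=
  ((hf.differentiableOn hn).differentiableAt (hs.mem_nhds hx)).hasDerivAt

section Inverse

variable {f : ℝ → ℝ} {a c y : ℝ}

lemma apply_invFunOn_Icc (hac : a ≤ c) (hf : ContinuousOn f (Icc a c))
    (hy : y ∈ Icc (f a) (f c)) : f (invFunOn f (Icc a c) y) = y :=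
  SurjOn.rightInvOn_invFunOn (intermediate_value_Icc hac hf) hy

lemma invFunOn_mem_Ioo (hac : a ≤ c) (hf : ContinuousOn f (Icc a c))
    (hy : y ∈ Ioo (f a) (f c)) : invFunOn f (Icc a c) y ∈ Ioo a c := by
  have hmem : invFunOn f (Icc a c) y ∈ Icc a c :=
    SurjOn.mapsTo_invFunOn (intermediate_value_Icc hac hf) (Ioo_subset_Icc_self hy)
  have hinv := apply_invFunOn_Icc hac hf (Ioo_subset_Icc_self hy)
  refine ⟨hmem.1.lt_of_ne ?_, hmem.2.lt_of_ne ?_⟩ <;> rintro h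
  · exact hy.1.ne (by rw [h, hinv])
  · exact hy.2.ne (by rw [← h, hinv])

lemma hasDerivAt_invFunOn_Icc (hac : a ≤ c) (hf : ContinuousOn f (Icc a c))
    (hmono : StrictMonoOn f (Icc a c)) (hy : y ∈ Ioo (f a) (f c)) {f' : ℝ}
    (hderiv : HasDerivAt f f' (invFunOn f (Icc a c) y)) (hf' : f' ≠ 0) :
    HasDerivAt (invFunOn f (Icc a c)) f'⁻¹ y := by
  set g := invFunOn f (Icc a c)
  have hfg : ∀ z ∈ Ioo (f a) (f c), f (g z) = z :=
    fun z hz => apply_invFunOn_Icc hac hf (Ioo_subset_Icc_self hz)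
  have hgmem : ∀ z ∈ Ioo (f a) (f c), g z ∈ Icc a c :=
    fun z hz => Ioo_subset_Icc_self (invFunOn_mem_Ioo hac hf hz)
  have hgmono : MonotoneOn g (Ioo (f a) (f c)) := fun z₁ h₁ z₂ h₂ h₁₂ =>
    (hmono.le_iff_le (hgmem z₁ h₁) (hgmem z₂ h₂)).1 (by rwa [hfg z₁ h₁, hfg z₂ h₂])
  have himage : Ioo a c ⊆ g '' Ioo (f a) (f c) := fun t ht =>
    ⟨f t, ⟨hmono (left_mem_Icc.2 hac) (Ioo_subset_Icc_self ht) ht.1,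
      hmono (Ioo_subset_Icc_self ht) (right_mem_Icc.2 hac) ht.2⟩,
      hmono.injOn.leftInvOn_invFunOn (Ioo_subset_Icc_self ht)⟩
  have hgy := invFunOn_mem_Ioo hac hf hy
  have hcont : ContinuousAt g y := continuousAt_of_monotoneOn_of_image_mem_nhds hgmono
    (Ioo_mem_nhds hy.1 hy.2) (mem_of_superset (Ioo_mem_nhds hgy.1 hgy.2) himage)
  exact hderiv.of_local_left_inverse hcont hf'
    (eventually_of_mem (Ioo_mem_nhds hy.1 hy.2) hfg)

end Inverse

section Interval

variable {a b : ℝ}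

lemma antitoneOn_Ioo_of_hasDerivAt_nonpos {f f' : ℝ → ℝ}
    (hf : ∀ x ∈ Ioo a b, HasDerivAt f (f' x) x) (hf' : ∀ x ∈ Ioo a b, f' x ≤ 0) :
    AntitoneOn f (Ioo a b) :=
  antitoneOn_of_hasDerivWithinAt_nonpos (convex_Ioo a b)
    (fun x hx => (hf x hx).continuousAt.continuousWithinAt)
    (by simpa only [interior_Ioo] using fun x hx => (hf x hx).hasDerivWithinAt)
    (by simpa only [interior_Ioo] using hf')

lemma AntitoneOn.le_of_le_of_tendsto_nhdsGT {f h : ℝ → ℝ} {l : ℝ} (hf : AntitoneOn f (Ioo a b))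
    (hfh : ∀ x ∈ Ioo a b, f x ≤ h x) (hh : Tendsto h (𝓝[>] a) (𝓝 l)) :
    ∀ x ∈ Ioo a b, f x ≤ l := by
  intro x hx
  refine ge_of_tendsto hh (mem_of_superset (Ioo_mem_nhdsGT hx.1) fun y hy => ?_)
  have hy' : y ∈ Ioo a b := ⟨hy.1, hy.2.trans hx.2⟩
  exact (hf hy' hx hy.2.le).trans (hfh y hy')

lemma tendsto_nhdsGT_of_mem_Ioc {T : ℝ → ℝ} (hT : ∀ s ∈ Ioo a b, T s ∈ Ioc a s) (hab : a < b) :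
    Tendsto T (𝓝[>] a) (𝓝[>] a) := by
  have hT' : ∀ᶠ s in 𝓝[>] a, T s ∈ Ioc a s :=
    mem_of_superset (Ioo_mem_nhdsGT hab) hT
  refine tendsto_nhdsWithin_of_tendsto_nhds_of_eventually_within _ ?_ (hT'.mono fun s hs => hs.1)
  exact tendsto_of_tendsto_of_tendsto_of_le_of_le' tendsto_const_nhds
    (tendsto_nhdsWithin_of_tendsto_nhds tendsto_id) (hT'.mono fun s hs => hs.1.le)
    (hT'.mono fun s hs => hs.2)

lemma tendsto_deriv_nhdsGT_derivWithin_Icc {u : ℝ → ℝ} (hab : a < b)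
    (hu : ContDiffOn ℝ 1 u (Icc a b)) :
    Tendsto (deriv u) (𝓝[>] a) (𝓝 (derivWithin u (Icc a b) a)) := by
  have hcont := hu.continuousOn_derivWithin (uniqueDiffOn_Icc hab) le_rfl a (left_mem_Icc.2 hab.le)
  rw [← nhdsWithin_Ioo_eq_nhdsGT hab]
  refine (hcont.tendsto.mono_left (nhdsWithin_mono _ Ioo_subset_Icc_self)).congr' ?_
  filter_upwards [self_mem_nhdsWithin] with x hx
  exact derivWithin_of_mem_nhds (Icc_mem_nhds hx.1 hx.2)

lemma exists_hasDerivAt_apply_eq_of_strictMonoOn {u v u' v' : ℝ → ℝ} (hab : a ≤ b)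
    (hu : ContinuousOn u (Icc a b)) (hmono : StrictMonoOn u (Icc a b))
    (hud : ∀ t ∈ Ioo a b, HasDerivAt u (u' t) t) (hu' : ∀ t ∈ Ioo a b, u' t ≠ 0)
    (hvd : ∀ s ∈ Ioo a b, HasDerivAt v (v' s) s)
    (hva : ∀ s ∈ Ioo a b, u a < v s) (hvu : ∀ s ∈ Ioo a b, v s ≤ u s) :
    ∃ T : ℝ → ℝ, (∀ s ∈ Ioo a b, T s ∈ Ioc a s) ∧ (∀ s ∈ Ioo a b, u (T s) = v s) ∧
      ∀ s ∈ Ioo a b, HasDerivAt T (v' s / u' (T s)) s := by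
  set g := invFunOn u (Icc a b)
  have hvs : ∀ s ∈ Ioo a b, v s ∈ Ioo (u a) (u b) := fun s hs =>
    ⟨hva s hs, (hvu s hs).trans_lt (hmono (Ioo_subset_Icc_self hs) (right_mem_Icc.2 hab) hs.2)⟩
  have hgv : ∀ s ∈ Ioo a b, g (v s) ∈ Ioo a b := fun s hs => invFunOn_mem_Ioo hab hu (hvs s hs)
  have hug : ∀ s ∈ Ioo a b, u (g (v s)) = v s := fun s hs =>
    apply_invFunOn_Icc hab hu (Ioo_subset_Icc_self (hvs s hs))
  refine ⟨g ∘ v, fun s hs => ⟨(hgv s hs).1, ?_⟩, hug, fun s hs => ?_⟩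
  · refine (hmono.le_iff_le (Ioo_subset_Icc_self (hgv s hs)) (Ioo_subset_Icc_self hs)).1 ?_
    exact (hug s hs).trans_le (hvu s hs)
  · rw [comp_apply, div_eq_inv_mul]
    exact (hasDerivAt_invFunOn_Icc hab hu hmono (hvs s hs) (hud _ (hgv s hs))
      (hu' _ (hgv s hs))).comp s (hvd s hs)

lemma comp_le_of_deriv_comp_le {T p q p' q' : ℝ → ℝ} (hT : ∀ s ∈ Ioo a b, T s ∈ Ioc a s)
    (hTd : ∀ s ∈ Ioo a b, HasDerivAt T (q s / p (T s)) s)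
    (hpd : ∀ t ∈ Ioo a b, HasDerivAt p (p' t) t) (hqd : ∀ s ∈ Ioo a b, HasDerivAt q (q' s) s)
    (hp : ∀ t ∈ Ioo a b, 0 < p t) (hq : ∀ s ∈ Ioo a b, 0 ≤ q s)
    (hpq' : ∀ s ∈ Ioo a b, p' (T s) ≤ q' s) (hp0 : Tendsto p (𝓝[>] a) (𝓝 0)) :
    ∀ s ∈ Ioo a b, p (T s) ≤ q s := by
  have hTmem : ∀ s ∈ Ioo a b, T s ∈ Ioo a b := fun s hs => ⟨(hT s hs).1, (hT s hs).2.trans_lt hs.2⟩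
  have henergy : ∀ s ∈ Ioo a b, HasDerivAt (fun s => p (T s) ^ 2 - q s ^ 2)
      (2 * q s * (p' (T s) - q' s)) s := by
    intro s hs
    have hpT := (hp _ (hTmem s hs)).ne'
    refine ((((hpd _ (hTmem s hs)).comp s (hTd s hs)).fun_pow 2).sub
      ((hqd s hs).fun_pow 2)).congr_deriv ?_
    rw [comp_apply]
    field_simp
    ring
  have hanti := antitoneOn_Ioo_of_hasDerivAt_nonpos henergy fun s hs =>
    mul_nonpos_of_nonneg_of_nonpos (mul_nonneg zero_le_two (hq s hs)) (sub_nonpos.2 (hpq' s hs))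
  intro s hs
  have hlim : Tendsto (fun s => p (T s) ^ 2) (𝓝[>] a) (𝓝 0) := by
    simpa using (hp0.comp (tendsto_nhdsGT_of_mem_Ioc hT (hs.1.trans hs.2))).pow 2
  have hsq := hanti.le_of_le_of_tendsto_nhdsGT
    (fun x _ => sub_le_self _ (sq_nonneg (q x))) hlim s hs
  exact (pow_le_pow_iff_left₀ (hp _ (hTmem s hs)).le (hq s hs) two_ne_zero).1 (sub_nonpos.1 hsq)

lemma eq_self_of_one_le_deriv {T T' : ℝ → ℝ} (hT : ∀ s ∈ Ioo a b, T s ∈ Ioc a s)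
    (hTd : ∀ s ∈ Ioo a b, HasDerivAt T (T' s) s) (hT' : ∀ s ∈ Ioo a b, 1 ≤ T' s) :
    ∀ s ∈ Ioo a b, T s = s := by
  have hanti : AntitoneOn (fun s => s - T s) (Ioo a b) :=
    antitoneOn_Ioo_of_hasDerivAt_nonpos (fun s hs => (hasDerivAt_id s).sub (hTd s hs))
      fun s hs => sub_nonpos.2 (hT' s hs)
  have hlim : Tendsto (fun s => s - a) (𝓝[>] a) (𝓝 0) := by
    simpa using (tendsto_nhdsWithin_of_tendsto_nhds (tendsto_id (x := 𝓝 a))).sub_const a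
  intro s hs
  have hle := hanti.le_of_le_of_tendsto_nhdsGT (fun x hx => by linarith [(hT x hx).1]) hlim s hs
  linarith [(hT s hs).2]

end Interval

theorem hopf_stepA_one_dimensional_general
(b : ℝ) (hb : 0 < b) (u v : ℝ → ℝ)
    (huv : ∀ x ∈ Icc (0:ℝ) b, v x ≤ u x)
    (hvpos : ∀ x ∈ Ioo (0:ℝ) b, 0 < v x)
    (hu3 : ContDiffOn ℝ 3 u (Ioo 0 b))
    (hu1 : ContDiffOn ℝ 1 u (Icc 0 b))
    (hv2 : ContDiffOn ℝ 2 v (Ioo 0 b))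
    (hv1 : ContDiffOn ℝ 1 v (Icc 0 b))
    (hu0 : u 0 = 0)
    (hu'0 : derivWithin u (Icc 0 b) 0 = 0)
    (hmain : ∀ t s : ℝ, 0 < t → t ≤ s → s < b → u t = v s →
      deriv (deriv u) t ≤ deriv (deriv v) s)
    (hu' : ∀ x ∈ Ioo (0:ℝ) b, 0 < deriv u x)
    (hv' : ∀ x ∈ Ioo (0:ℝ) b, 0 ≤ deriv v x) :
    ∀ x ∈ Icc (0:ℝ) b, u x = v x := by
  have hmono : StrictMonoOn u (Icc 0 b) :=
    strictMonoOn_of_deriv_pos (convex_Icc 0 b) hu1.continuousOn (by rwa [interior_Icc])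
  have hud (t) (ht : t ∈ Ioo 0 b) := hu3.hasDerivAt_deriv isOpen_Ioo (by norm_num) ht
  have hvd (s) (hs : s ∈ Ioo 0 b) := hv2.hasDerivAt_deriv isOpen_Ioo (by norm_num) hs
  have hu'd (t) (ht : t ∈ Ioo 0 b) := (hu3.deriv_of_isOpen (m := 1) isOpen_Ioo (by norm_num))
    |>.hasDerivAt_deriv isOpen_Ioo (by norm_num) ht
  have hv'd (s) (hs : s ∈ Ioo 0 b) := (hv2.deriv_of_isOpen (m := 1) isOpen_Ioo (by norm_num))
    |>.hasDerivAt_deriv isOpen_Ioo (by norm_num) hs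
  obtain ⟨T, hT, hTeq, hTd⟩ := exists_hasDerivAt_apply_eq_of_strictMonoOn hb.le
    hu1.continuousOn hmono hud (fun t ht => (hu' t ht).ne') hvd (by rwa [hu0])
    fun s hs => huv s (Ioo_subset_Icc_self hs)
  have hslope : ∀ s ∈ Ioo 0 b, deriv u (T s) ≤ deriv v s :=
    comp_le_of_deriv_comp_le hT hTd hu'd hv'd hu' hv'
      (fun s hs => hmain _ s (hT s hs).1 (hT s hs).2 hs.2 (hTeq s hs))
      (by simpa only [hu'0] using tendsto_deriv_nhdsGT_derivWithin_Icc hb hu1)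
  have hTid := eq_self_of_one_le_deriv hT hTd fun s hs =>
    (one_le_div (hu' _ ⟨(hT s hs).1, (hT s hs).2.trans_lt hs.2⟩)).2 (hslope s hs)
  have heq : EqOn u v (Ioo 0 b) := fun s hs => by simpa only [hTid s hs] using hTeq s hs
  exact fun x hx => heq.of_subset_closure hu1.continuousOn hv1.continuousOn Ioo_subset_Icc_self
    (by rw [closure_Ioo hb.ne]) hx

/-- Step A of the Appendix proof of Theorem 1.1. -/
theorem hopf_stepA_one_dimensional
(b : ℝ) (hb : 0 < b) (u v : ℝ → ℝ)
    (huv : ∀ x ∈ Icc (0:ℝ) b, v x ≤ u x)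
    (hupos : ∀ x ∈ Ioo (0:ℝ) b, 0 < u x)
    (hvpos : ∀ x ∈ Ioo (0:ℝ) b, 0 < v x)
    (hu3 : ContDiffOn ℝ 3 u (Ioo 0 b))
    (hu1 : ContDiffOn ℝ 1 u (Icc 0 b))
    (hv2 : ContDiffOn ℝ 2 v (Ioo 0 b))
    (hv1 : ContDiffOn ℝ 1 v (Icc 0 b))
    (hu0 : u 0 = 0)
    (hu'0 : derivWithin u (Icc 0 b) 0 = 0)
    (hmain : ∀ t s : ℝ, 0 < t → t ≤ s → s < b → u t = v s →
      deriv (deriv u) t ≤ deriv (deriv v) s)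
    (hu' : ∀ x ∈ Ioo (0:ℝ) b, 0 < deriv u x)
    (hv' : ∀ x ∈ Ioo (0:ℝ) b, 0 ≤ deriv v x) :
    ∀ x ∈ Icc (0:ℝ) b, u x = v x :=
  hopf_stepA_one_dimensional_general b hb u v huv hvpos hu3 hu1 hv2 hv1 hu0 hu'0 hmain hu' hv'
end

section
/- Let b > 0 and let u ≥ v be positive functions on (0,b), with u ∈ C³((0,b)) ∩ C¹([0,b]), v ∈ C²((0,b)) ∩ C¹([0,b]), u(0) = u'(0) = 0, u' > 0 on (0,b), v' ≥ 0 on (0,b), and the main condition: whenever u(t) = v(s) with 0 < t ≤ s < b, then u''(t) ≤ v''(s). For each s ∈ (0,b), let t(s) ∈ (0,s] be the unique point with u(t(s)) = v(s) (which exists since u is strictly increasing with u(0) = 0 and 0 < v(s) ≤ u(s)). Then v'(s)² ≥ u'(t(s))² for all s ∈ (0,b). -/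
/-!
Since `u ∘ T = v` and `u` is strictly increasing, `T` is continuous, hence differentiable with
`T' = v' / u'(T)`. Therefore `h = v'² - u'(T)²` has derivative `2 v' (v'' - u''(T)) ≥ 0`, so `h` is
nondecreasing on `(0, b)`. As `σ → 0⁺` we have `0 < T σ ≤ σ`, so `u'(T σ) → u'(0) = 0` and
`h s ≥ h σ ≥ -u'(T σ)² → 0`.
-/

open Set Filter Topology

theorem HasDerivAt.of_comp_of_ne_zero {𝕜 : Type*} [NontriviallyNormedField 𝕜]
    {f g h : 𝕜 → 𝕜} {f' h' a : 𝕜} (hg : ContinuousAt g a) (hf : HasDerivAt f f' (g a))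
    (hf' : f' ≠ 0) (hh : HasDerivAt h h' a) (hcomp : f ∘ g =ᶠ[𝓝 a] h) :
    HasDerivAt g (h' / f') a := by
  have := hf.hasFDerivAt.of_comp_of_leftInverse hg hh.hasFDerivAt hcomp
    (f'symm := ContinuousLinearMap.smulRight (1 : 𝕜 →L[𝕜] 𝕜) f'⁻¹)
    (fun x => by simp [mul_inv_cancel_right₀ hf'])
  simpa [div_eq_mul_inv, mul_comm] using this.hasDerivAt

theorem StrictMonoOn.continuousAt_of_comp_eq {f g h : ℝ → ℝ} {I : Set ℝ} {a : ℝ}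
    (hf : StrictMonoOn f I) (hI : I ∈ 𝓝 (g a)) (hgI : ∀ᶠ x in 𝓝 a, g x ∈ I)
    (hcomp : f ∘ g =ᶠ[𝓝 a] h) (hh : ContinuousAt h a) : ContinuousAt g a := by
  refine tendsto_order.2 ⟨fun c hc => ?_, fun c hc => ?_⟩
  · obtain ⟨d, hdI, hcd, hda⟩ :=
      Filter.nonempty_of_mem (inter_mem (mem_nhdsWithin_of_mem_nhds hI) (Ioo_mem_nhdsLT hc))
    have hlt : f d < h a := hcomp.self_of_nhds ▸ hf hdI (mem_of_mem_nhds hI) hda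
    filter_upwards [hgI, hcomp, hh.eventually (lt_mem_nhds hlt)] with x hxI hx hdx
    exact hcd.trans ((hf.lt_iff_lt hdI hxI).1 (hdx.trans_eq hx.symm))
  · obtain ⟨d, hdI, had, hdc⟩ :=
      Filter.nonempty_of_mem (inter_mem (mem_nhdsWithin_of_mem_nhds hI) (Ioo_mem_nhdsGT hc))
    have hlt : h a < f d := hcomp.self_of_nhds ▸ hf (mem_of_mem_nhds hI) hdI had
    filter_upwards [hgI, hcomp, hh.eventually (gt_mem_nhds hlt)] with x hxI hx hdx
    exact ((hf.lt_iff_lt hxI hdI).1 (hx.trans_lt hdx)).trans hdc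

theorem HasDerivAt.sq_sub_sq_comp {𝕜 : Type*} [NontriviallyNormedField 𝕜]
    {f g T : 𝕜 → 𝕜} {f' g' s : 𝕜} (hf : HasDerivAt f f' s) (hg : HasDerivAt g g' (T s))
    (hT : HasDerivAt T (f s / g (T s)) s) (hg0 : g (T s) ≠ 0) :
    HasDerivAt (fun σ => f σ ^ 2 - g (T σ) ^ 2) (2 * f s * (f' - g')) s := by
  refine ((hf.fun_pow 2).fun_sub ((hg.comp s hT).fun_pow 2)).congr_deriv ?_
  rw [Function.comp_apply]
  field_simp
  ring

theorem ContDiffOn.tendsto_deriv_nhdsGT {f : ℝ → ℝ} {a b : ℝ} (hab : a < b)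
    (hf : ContDiffOn ℝ 1 f (Icc a b)) :
    Tendsto (deriv f) (𝓝[>] a) (𝓝 (derivWithin f (Icc a b) a)) := by
  have hcont := (hf.continuousOn_derivWithin (uniqueDiffOn_Icc hab) le_rfl a
    (left_mem_Icc.2 hab.le)).mono Ioo_subset_Icc_self
  rw [ContinuousWithinAt, nhdsWithin_Ioo_eq_nhdsGT hab] at hcont
  refine hcont.congr' ?_
  filter_upwards [Ioo_mem_nhdsGT hab] with x hx
  exact derivWithin_of_mem_nhds (Icc_mem_nhds hx.1 hx.2)

theorem monotoneOn_sq_deriv_sub_sq_deriv_comp {u v T : ℝ → ℝ} {a b : ℝ}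
    (hu : ContDiffOn ℝ 2 u (Ioo a b)) (hv : ContDiffOn ℝ 2 v (Ioo a b))
    (hu' : ∀ x ∈ Ioo a b, 0 < deriv u x) (hv' : ∀ x ∈ Ioo a b, 0 ≤ deriv v x)
    (hT : ∀ s ∈ Ioo a b, T s ∈ Ioo a b ∧ u (T s) = v s)
    (hu''v'' : ∀ s ∈ Ioo a b, deriv (deriv u) (T s) ≤ deriv (deriv v) s) :
    MonotoneOn (fun s => deriv v s ^ 2 - deriv u (T s) ^ 2) (Ioo a b) := by
  have hasDerivAt {f : ℝ → ℝ} {n : WithTop ℕ∞} (hf : ContDiffOn ℝ n f (Ioo a b)) (hn : n ≠ 0)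
      {x : ℝ} (hx : x ∈ Ioo a b) : HasDerivAt f (deriv f x) x :=
    ((hf.differentiableOn hn).differentiableAt (isOpen_Ioo.mem_nhds hx)).hasDerivAt
  have hu1 := hu.deriv_of_isOpen isOpen_Ioo (m := 1) (by norm_num)
  have hv1 := hv.deriv_of_isOpen isOpen_Ioo (m := 1) (by norm_num)
  have hu_mono : StrictMonoOn u (Ioo a b) :=
    strictMonoOn_of_deriv_pos (convex_Ioo a b) hu.continuousOn (by rwa [interior_Ioo])
  have hderiv : ∀ s ∈ Ioo a b, HasDerivAt (fun s => deriv v s ^ 2 - deriv u (T s) ^ 2)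
      (2 * deriv v s * (deriv (deriv v) s - deriv (deriv u) (T s))) s := by
    intro s hs
    have hTs := (hT s hs).1
    have hcomp : u ∘ T =ᶠ[𝓝 s] v := by
      filter_upwards [isOpen_Ioo.mem_nhds hs] with x hx using (hT x hx).2
    have hTc : ContinuousAt T s :=
      hu_mono.continuousAt_of_comp_eq (isOpen_Ioo.mem_nhds hTs)
        (by filter_upwards [isOpen_Ioo.mem_nhds hs] with x hx using (hT x hx).1) hcomp
        (hasDerivAt hv two_ne_zero hs).continuousAt
    have hT' := HasDerivAt.of_comp_of_ne_zero hTc (hasDerivAt hu two_ne_zero hTs)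
      (hu' _ hTs).ne' (hasDerivAt hv two_ne_zero hs) hcomp
    exact (hasDerivAt hv1 one_ne_zero hs).sq_sub_sq_comp (hasDerivAt hu1 one_ne_zero hTs) hT' (hu' _ hTs).ne'
  refine monotoneOn_of_hasDerivWithinAt_nonneg (convex_Ioo a b)
    (f' := fun s => 2 * deriv v s * (deriv (deriv v) s - deriv (deriv u) (T s)))
    (fun x hx => (hderiv x hx).continuousAt.continuousWithinAt) ?_ ?_ <;> rw [interior_Ioo]
  · exact fun x hx => (hderiv x hx).hasDerivWithinAt
  · intro x hx
    have := hv' x hx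
    have := sub_nonneg.2 (hu''v'' x hx)
    positivity

theorem hopf_A4_inequality_one_dimensional_general
(b : ℝ) (u v : ℝ → ℝ)
    (hu3 : ContDiffOn ℝ 3 u (Ioo 0 b))
    (hu1 : ContDiffOn ℝ 1 u (Icc 0 b))
    (hv2 : ContDiffOn ℝ 2 v (Ioo 0 b))
    (hu'0 : derivWithin u (Icc 0 b) 0 = 0)
    (hmain : ∀ t s : ℝ, 0 < t → t ≤ s → s < b → u t = v s →
      deriv (deriv u) t ≤ deriv (deriv v) s)
    (hu' : ∀ x ∈ Ioo (0:ℝ) b, 0 < deriv u x)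
    (hv' : ∀ x ∈ Ioo (0:ℝ) b, 0 ≤ deriv v x)
    (T : ℝ → ℝ)
    (hT : ∀ s ∈ Ioo (0:ℝ) b, (0 < T s ∧ T s ≤ s) ∧ u (T s) = v s) :
    ∀ s ∈ Ioo (0:ℝ) b, (deriv u (T s)) ^ 2 ≤ (deriv v s) ^ 2 := by
  intro s hs
  have hb : 0 < b := hs.1.trans hs.2
  have hmono := monotoneOn_sq_deriv_sub_sq_deriv_comp (hu3.of_le (by norm_num)) hv2 hu' hv'
    (fun σ hσ => ⟨⟨(hT σ hσ).1.1, (hT σ hσ).1.2.trans_lt hσ.2⟩, (hT σ hσ).2⟩)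
    (fun σ hσ => hmain _ _ (hT σ hσ).1.1 (hT σ hσ).1.2 hσ.2 (hT σ hσ).2)
  have hT0 : Tendsto T (𝓝[>] 0) (𝓝[>] 0) := by
    have hTσ : ∀ᶠ σ in 𝓝[>] (0 : ℝ), 0 < T σ ∧ T σ ≤ σ := by
      filter_upwards [Ioo_mem_nhdsGT hb] with σ hσ using (hT σ hσ).1
    refine tendsto_nhdsWithin_iff.2 ⟨?_, hTσ.mono fun σ h => h.1⟩
    exact tendsto_of_tendsto_of_tendsto_of_le_of_le' tendsto_const_nhds
      (tendsto_id.mono_left nhdsWithin_le_nhds) (hTσ.mono fun σ h => h.1.le)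
      (hTσ.mono fun σ h => h.2)
  have hlim : Tendsto (fun σ => -deriv u (T σ) ^ 2) (𝓝[>] 0) (𝓝 0) := by
    simpa [hu'0] using (((hu1.tendsto_deriv_nhdsGT hb).comp hT0).pow 2).neg
  have : 0 ≤ deriv v s ^ 2 - deriv u (T s) ^ 2 := by
    refine le_of_tendsto hlim ?_
    filter_upwards [Ioo_mem_nhdsGT hs.1] with σ hσ
    calc -deriv u (T σ) ^ 2 ≤ deriv v σ ^ 2 - deriv u (T σ) ^ 2 := by
          linarith [sq_nonneg (deriv v σ)]
      _ ≤ deriv v s ^ 2 - deriv u (T s) ^ 2 := hmono ⟨hσ.1, hσ.2.trans hs.2⟩ hs hσ.2.le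
  linarith

/-- The key inequality from (A.4) in Step A of the Appendix: v'(s)² ≥ u'(t(s))². -/
theorem hopf_A4_inequality_one_dimensional
(b : ℝ) (hb : 0 < b) (u v : ℝ → ℝ)
    (huv : ∀ x ∈ Icc (0:ℝ) b, v x ≤ u x)
    (hupos : ∀ x ∈ Ioo (0:ℝ) b, 0 < u x)
    (hvpos : ∀ x ∈ Ioo (0:ℝ) b, 0 < v x)
    (hu3 : ContDiffOn ℝ 3 u (Ioo 0 b))
    (hu1 : ContDiffOn ℝ 1 u (Icc 0 b))
    (hv2 : ContDiffOn ℝ 2 v (Ioo 0 b))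
    (hv1 : ContDiffOn ℝ 1 v (Icc 0 b))
    (hu0 : u 0 = 0)
    (hu'0 : derivWithin u (Icc 0 b) 0 = 0)
    (hmain : ∀ t s : ℝ, 0 < t → t ≤ s → s < b → u t = v s →
      deriv (deriv u) t ≤ deriv (deriv v) s)
    (hu' : ∀ x ∈ Ioo (0:ℝ) b, 0 < deriv u x)
    (hv' : ∀ x ∈ Ioo (0:ℝ) b, 0 ≤ deriv v x)
    (T : ℝ → ℝ)
    (hT : ∀ s ∈ Ioo (0:ℝ) b, (0 < T s ∧ T s ≤ s) ∧ u (T s) = v s) :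
    ∀ s ∈ Ioo (0:ℝ) b, (deriv u (T s)) ^ 2 ≤ (deriv v s) ^ 2 :=
  hopf_A4_inequality_one_dimensional_general b u v hu3 hu1 hv2 hu'0 hmain hu' hv' T hT
end
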